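/- arXiv:1810.09787 — 3 statements merged into one kernel-verified Lean document; each statement's English description precedes it below -/
import Mathlib

section
/- With t the infinite tribonacci word, B its sequence of positions of 0s, one has B(k+1) − B(k) = 2 − t(k)(t(k)−1)/2 for all k ≥ 0; equivalently the gap is 1 if t(k)=2 and 2 otherwise. -/
/-!
Since `t = σ(t)`, the word `t` factors as `σ(t 0) σ(t 1) σ(t 2) ⋯`. Each block `σ(a)` is a `0`
followed by nonzero letters, so the `(k+1)`-st zero of `t` is the first letter of the `k`-th
block, and `B (k + 1) - B k` is the length of `σ(t k)`: `1` if `t k = 2` and `2` otherwise.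
-/

/-- The tribonacci substitution on letters: 0 ↦ 01, 1 ↦ 02, 2 ↦ 0. -/
def sigmaW : ℕ → List ℕ
  | 0 => [0, 1]
  | 1 => [0, 2]
  | _ => [0]

/-- The substitution extended to words (concatenation homomorphism). -/
def sigmaL (w : List ℕ) : List ℕ := w.flatMap sigmaW

/-- The infinite tribonacci word t = 0,1,0,2,0,1,0,0,1,0,2,...,
the fixed point of the substitution starting from 0. -/
def t (n : ℕ) : ℕ := (sigmaL^[n + 1] [0]).getD n 0

/-- A(n): position of the (n+1)-st occurrence of the letter 1 in t. -/
noncomputable def A (n : ℕ) : ℕ := Nat.nth (fun k => t k = 1) n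

/-- B(n): position of the (n+1)-st occurrence of the letter 0 in t. -/
noncomputable def B (n : ℕ) : ℕ := Nat.nth (fun k => t k = 0) n

/-- C(n): position of the (n+1)-st occurrence of the letter 2 in t. -/
noncomputable def C (n : ℕ) : ℕ := Nat.nth (fun k => t k = 2) n

namespace Tribonacci

open List

lemma sigmaL_append (u v : List ℕ) : sigmaL (u ++ v) = sigmaL u ++ sigmaL v :=
  flatMap_append

lemma sigmaL_cons (a : ℕ) (l : List ℕ) : sigmaL (a :: l) = sigmaW a ++ sigmaL l :=
  flatMap_cons

lemma length_sigmaW_pos (a : ℕ) : 0 < (sigmaW a).length := by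
  rcases a with _ | _ | a <;> simp [sigmaW]

lemma getElem_sigmaW_zero (a : ℕ) : (sigmaW a)[0]'(length_sigmaW_pos a) = 0 := by
  rcases a with _ | _ | a <;> simp [sigmaW]

lemma le_two_of_mem_sigmaL {l : List ℕ} {x : ℕ} (hx : x ∈ sigmaL l) : x ≤ 2 := by
  obtain ⟨a, -, hx⟩ := mem_flatMap.mp hx
  rcases a with _ | _ | a <;> simp [sigmaW] at hx <;> omega

lemma length_le_length_sigmaL (l : List ℕ) : l.length ≤ (sigmaL l).length := by
  induction l with
  | nil => simp
  | cons a l ih =>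
    have := length_sigmaW_pos a
    simp only [sigmaL_cons, length_append, length_cons]
    omega

def tribPrefix (m : ℕ) : List ℕ := sigmaL^[m] [0]

lemma tribPrefix_succ (m : ℕ) : tribPrefix (m + 1) = sigmaL (tribPrefix m) :=
  Function.iterate_succ_apply' sigmaL m [0]

lemma tribPrefix_prefix_succ (m : ℕ) : tribPrefix m <+: tribPrefix (m + 1) := by
  induction m with
  | zero => decide
  | succ n ih =>
    rw [tribPrefix_succ, tribPrefix_succ]
    exact ih.flatMap sigmaW

lemma tribPrefix_prefix_of_le {m m' : ℕ} (h : m ≤ m') : tribPrefix m <+: tribPrefix m' :=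
  Nat.rel_of_forall_rel_succ_of_le _ tribPrefix_prefix_succ h

lemma lt_length_tribPrefix (m : ℕ) : m < (tribPrefix m).length := by
  induction m with
  | zero => simp [tribPrefix]
  | succ n ih =>
    obtain ⟨r, hr⟩ : ∃ r, 0 :: r = tribPrefix n := tribPrefix_prefix_of_le (Nat.zero_le n)
    have := length_le_length_sigmaL r
    rw [← hr] at ih
    rw [tribPrefix_succ, ← hr, sigmaL_cons]
    simp only [sigmaW, length_append, length_cons, length_nil] at ih ⊢
    omega

lemma lt_length_tribPrefix_succ (n : ℕ) : n < (tribPrefix (n + 1)).length :=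
  (lt_length_tribPrefix (n + 1)).trans' n.lt_succ_self

lemma getElem_tribPrefix {m n : ℕ} (hn : n < (tribPrefix m).length) : (tribPrefix m)[n] = t n := by
  have hn' := lt_length_tribPrefix_succ n
  rw [show t n = (tribPrefix (n + 1))[n] from getD_eq_getElem _ _ hn']
  rcases le_total m (n + 1) with h | h
  · exact (tribPrefix_prefix_of_le h).getElem hn
  · exact ((tribPrefix_prefix_of_le h).getElem hn').symm

lemma take_tribPrefix {m k : ℕ} (hk : k ≤ (tribPrefix m).length) :
    (tribPrefix m).take k = (range k).map t :=
  ext_getElem (by simpa using hk) fun i _ _ => by simp [getElem_tribPrefix]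

lemma t_le_two (n : ℕ) : t n ≤ 2 := by
  have hmem := getElem_mem (lt_length_tribPrefix_succ n)
  rw [getElem_tribPrefix, tribPrefix_succ] at hmem
  exact le_two_of_mem_sigmaL hmem

def blockStart (k : ℕ) : ℕ := (sigmaL ((range k).map t)).length

lemma blockStart_succ (k : ℕ) : blockStart (k + 1) = blockStart k + (sigmaW (t k)).length := by
  simp [blockStart, range_succ, sigmaL]

lemma t_blockStart_add {k j : ℕ} (hj : j < (sigmaW (t k)).length) :
    t (blockStart k + j) = (sigmaW (t k))[j] := by
  have hk := lt_length_tribPrefix_succ k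
  obtain ⟨rest, hrest⟩ : ∃ rest, tribPrefix (k + 1) = (range k).map t ++ t k :: rest :=
    ⟨_, by rw [← take_tribPrefix (m := k + 1) (by omega), ← getElem_tribPrefix (m := k + 1) hk,
      ← drop_eq_getElem_cons, take_append_drop]⟩
  have hsplit : tribPrefix (k + 2) = sigmaL ((range k).map t) ++ (sigmaW (t k) ++ sigmaL rest) := by
    rw [tribPrefix_succ, hrest, sigmaL_append, sigmaL_cons]
  have hlen : blockStart k + j < (tribPrefix (k + 2)).length := by
    rw [hsplit]; simp only [blockStart, length_append]; omega
  rw [← getElem_tribPrefix hlen, getElem_of_eq hsplit, getElem_append_right (by simp [blockStart]),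
    getElem_append_left (by simpa [blockStart] using hj)]
  simp [blockStart]

lemma t_blockStart (k : ℕ) : t (blockStart k) = 0 := by
  simpa [getElem_sigmaW_zero] using t_blockStart_add (length_sigmaW_pos (t k))

lemma count_zero_block (k : ℕ) :
    Nat.count (fun j => t (blockStart k + j) = 0) (sigmaW (t k)).length = 1 := by
  have hstart := t_blockStart k
  by_cases h2 : t k = 2
  · simp [h2, sigmaW, Nat.count_succ, hstart]
  · have h01 : t k = 0 ∨ t k = 1 := by have := t_le_two k; omega
    have hlen : (sigmaW (t k)).length = 2 := by rcases h01 with h | h <;> simp [h, sigmaW]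
    have hsecond : t (blockStart k + 1) ≠ 0 := by
      rw [t_blockStart_add (hlen ▸ one_lt_two)]
      rcases h01 with h | h <;> simp [h, sigmaW]
    simp [hlen, Nat.count_succ, hstart, hsecond]

lemma count_blockStart (k : ℕ) : Nat.count (fun n => t n = 0) (blockStart k) = k := by
  induction k with
  | zero => simp [blockStart, sigmaL]
  | succ k ih => rw [blockStart_succ, Nat.count_add, ih, count_zero_block]

lemma B_eq_blockStart (k : ℕ) : B k = blockStart k := by
  conv_lhs => rw [← count_blockStart k]
  exact Nat.nth_count (t_blockStart k)

end Tribonacci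

/-- B(k+1) − B(k) = 2 − t(k)(t(k)−1)/2; equivalently the gap is 1 if t(k)=2 and
2 otherwise. -/
theorem B_diff (k : ℕ) :
    2 * ((B (k + 1) : ℤ) - B k) = 4 - (t k : ℤ) * ((t k : ℤ) - 1) ∧
    (t k = 2 → B (k + 1) = B k + 1) ∧ (t k ≠ 2 → B (k + 1) = B k + 2) := by
  have hgap : B (k + 1) = B k + (sigmaW (t k)).length := by
    rw [Tribonacci.B_eq_blockStart, Tribonacci.B_eq_blockStart, Tribonacci.blockStart_succ]
  obtain h | h | h : t k = 0 ∨ t k = 1 ∨ t k = 2 := by have := Tribonacci.t_le_two k; omega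
  all_goals simp [hgap, h, sigmaW]
end

section
/- With t the infinite tribonacci word, C its sequence of positions of 2s, one has C(k+1) − C(k) = 7 − t(k)(t(k)+1)/2 for all k ≥ 0. -/
/-!
The word `t` is a fixed point of `σ³`, so it factors as `σ³(t 0) σ³(t 1) σ³(t 2) ⋯`, the block
`σ³(t n)` starting at position `|σ³(t 0 ⋯ t (n-1))|`. Each of the blocks `σ³(0) = 0102010`,
`σ³(1) = 010201`, `σ³(2) = 0102` contains the letter `2` exactly once, at offset `3`. Hence
`C n = |σ³(t 0 ⋯ t (n-1))| + 3`, and `C (k+1) - C k = |σ³(t k)|`, which is `7`, `6` or `4`.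
-/

lemma sigmaL_append (u v : List ℕ) : sigmaL (u ++ v) = sigmaL u ++ sigmaL v :=
  List.flatMap_append

lemma sigmaL_iterate_append (k : ℕ) (u v : List ℕ) :
    sigmaL^[k] (u ++ v) = sigmaL^[k] u ++ sigmaL^[k] v := by
  induction k with
  | zero => rfl
  | succ k ih => simp only [Function.iterate_succ_apply', ih, sigmaL_append]

lemma List.IsPrefix.sigmaL_iterate {u v : List ℕ} (h : u <+: v) (k : ℕ) :
    sigmaL^[k] u <+: sigmaL^[k] v := by
  obtain ⟨w, rfl⟩ := h
  exact ⟨sigmaL^[k] w, (sigmaL_iterate_append k u w).symm⟩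

lemma length_sigmaL (w : List ℕ) : (sigmaL w).length = w.length + w.countP (· < 2) := by
  induction w with
  | nil => rfl
  | cons a w ih =>
    rw [← List.singleton_append, sigmaL_append, List.length_append, ih]
    match a with
    | 0 | 1 | _ + 2 => simp [sigmaL, sigmaW]; omega

lemma length_le_length_sigmaL_iterate (k : ℕ) (w : List ℕ) :
    w.length ≤ (sigmaL^[k] w).length := by
  induction k with
  | zero => rfl
  | succ k ih => rw [Function.iterate_succ_apply', length_sigmaL]; omega

lemma le_two_of_mem_sigmaL {w : List ℕ} {x : ℕ} (hx : x ∈ sigmaL w) : x ≤ 2 := by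
  obtain ⟨a, -, hxa⟩ := List.mem_flatMap.1 hx
  match a with
  | 0 | 1 | _ + 2 => simp [sigmaW] at hxa; omega

def tribWord (m : ℕ) : List ℕ := sigmaL^[m] [0]

lemma tribWord_prefix {m m' : ℕ} (h : m ≤ m') : tribWord m <+: tribWord m' := by
  induction m', h using Nat.le_induction with
  | base => exact List.prefix_refl _
  | succ m' _ ih =>
    exact ih.trans (List.IsPrefix.sigmaL_iterate (u := [0]) (v := sigmaL [0]) ⟨[1], rfl⟩ m')

lemma lt_length_tribWord (m : ℕ) : m < (tribWord m).length := by
  induction m with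
  | zero => simp [tribWord]
  | succ m ih =>
    have h0 : 0 ∈ tribWord m := (tribWord_prefix (Nat.zero_le m)).subset (by simp [tribWord])
    have hpos : 0 < (tribWord m).countP (· < 2) := List.countP_pos_iff.2 ⟨0, h0, by decide⟩
    rw [tribWord, Function.iterate_succ_apply', ← tribWord, length_sigmaL]
    omega

lemma t_eq_getElem {m n : ℕ} (h : n < (tribWord m).length) : t n = (tribWord m)[n] := by
  have hn : n < (tribWord (n + 1)).length := (lt_length_tribWord (n + 1)).trans' (by omega)
  rw [t, ← tribWord, List.getD_eq_getElem _ _ hn]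
  rcases le_total m (n + 1) with hm | hm
  · exact ((tribWord_prefix hm).getElem h).symm
  · exact (tribWord_prefix hm).getElem hn

lemma t_le_two (n : ℕ) : t n ≤ 2 := by
  rw [t_eq_getElem (m := n + 1) ((lt_length_tribWord (n + 1)).trans' n.lt_succ_self)]
  apply le_two_of_mem_sigmaL (w := tribWord n)
  rw [tribWord, ← Function.iterate_succ_apply' sigmaL]
  exact List.getElem_mem _

def tPrefix (n : ℕ) : List ℕ := (List.range n).map t

@[simp] lemma length_tPrefix (n : ℕ) : (tPrefix n).length = n := by simp [tPrefix]

lemma tPrefix_succ (n : ℕ) : tPrefix (n + 1) = tPrefix n ++ [t n] := by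
  simp [tPrefix, List.range_succ]

lemma eq_tPrefix_of_prefix_tribWord {u : List ℕ} {m : ℕ} (h : u <+: tribWord m) :
    u = tPrefix u.length := by
  refine List.ext_getElem (by simp) fun i hi _ => ?_
  simp [tPrefix, t_eq_getElem (h.length_le.trans_lt' hi), h.getElem hi]

lemma tPrefix_prefix_tribWord (n : ℕ) : tPrefix n <+: tribWord n := by
  have h := List.take_prefix n (tribWord n)
  rwa [eq_tPrefix_of_prefix_tribWord h, List.length_take,
    min_eq_left (lt_length_tribWord n).le] at h

/-- `blockStart k n` is where the block `σᵏ(t n)` begins in the factorisation `t = σᵏ(t)`. -/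
def blockStart (k n : ℕ) : ℕ := (sigmaL^[k] (tPrefix n)).length

lemma sigmaL_iterate_tPrefix (k n : ℕ) : sigmaL^[k] (tPrefix n) = tPrefix (blockStart k n) := by
  apply eq_tPrefix_of_prefix_tribWord (m := k + n)
  rw [tribWord, Function.iterate_add_apply]
  exact (tPrefix_prefix_tribWord n).sigmaL_iterate k

lemma blockStart_succ (k n : ℕ) :
    blockStart k (n + 1) = blockStart k n + (sigmaL^[k] [t n]).length := by
  rw [blockStart, tPrefix_succ, sigmaL_iterate_append, List.length_append, blockStart]

lemma blockStart_strictMono (k : ℕ) : StrictMono (blockStart k) :=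
  strictMono_nat_of_lt_succ fun n => by
    have := length_le_length_sigmaL_iterate k [t n]
    rw [blockStart_succ]
    simp only [List.length_singleton] at this
    omega

lemma t_blockStart_add {k n i : ℕ} (hi : i < (sigmaL^[k] [t n]).length) :
    t (blockStart k n + i) = (sigmaL^[k] [t n])[i] := by
  have hlt : blockStart k n + i < blockStart k (n + 1) := by rw [blockStart_succ]; omega
  have h : (sigmaL^[k] (tPrefix (n + 1)))[blockStart k n + i]? = some (t (blockStart k n + i)) := by
    rw [sigmaL_iterate_tPrefix]
    simp [tPrefix, hlt]
  rw [tPrefix_succ, sigmaL_iterate_append, sigmaL_iterate_tPrefix,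
    List.getElem?_append_right (by simp), length_tPrefix, Nat.add_sub_cancel_left,
    List.getElem?_eq_getElem hi] at h
  exact (Option.some_injective _ h).symm

lemma blockStart_zero (k : ℕ) : blockStart k 0 = 0 := by
  simp [blockStart, tPrefix, Function.iterate_fixed (show sigmaL [] = [] from rfl)]

lemma exists_blockStart_add (k m : ℕ) :
    ∃ n i, i < (sigmaL^[k] [t n]).length ∧ blockStart k n + i = m := by
  have hmono := blockStart_strictMono k
  obtain ⟨n, hn, hn'⟩ := hmono.exists_between_of_tendsto_atTop hmono.tendsto_atTop
    (x := m + 1) (by simp [blockStart_zero])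
  rw [blockStart_succ] at hn'
  exact ⟨n, m - blockStart k n, by omega, by omega⟩

lemma getElem_sigmaL_iterate_three_eq_two_iff :
    ∀ a ≤ 2, ∀ i (hi : i < (sigmaL^[3] [a]).length), (sigmaL^[3] [a])[i] = 2 ↔ i = 3 := by
  decide

lemma three_lt_length_sigmaL_iterate_three : ∀ a ≤ 2, 3 < (sigmaL^[3] [a]).length := by
  decide

lemma length_sigmaL_iterate_three : ∀ a ≤ 2, 2 * (sigmaL^[3] [a]).length + a * (a + 1) = 14 := by
  decide

lemma t_eq_two_iff (m : ℕ) : t m = 2 ↔ m ∈ Set.range (blockStart 3 · + 3) := by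
  constructor
  · intro hm
    obtain ⟨n, i, hi, rfl⟩ := exists_blockStart_add 3 m
    rw [t_blockStart_add hi, getElem_sigmaL_iterate_three_eq_two_iff _ (t_le_two n)] at hm
    exact ⟨n, hm ▸ rfl⟩
  · rintro ⟨n, rfl⟩
    rw [t_blockStart_add (three_lt_length_sigmaL_iterate_three _ (t_le_two n)),
      getElem_sigmaL_iterate_three_eq_two_iff _ (t_le_two n)]

lemma Nat.nth_eq_of_strictMono {p : ℕ → Prop} {f : ℕ → ℕ} (hf : StrictMono f)
    (hp : ∀ m, p m ↔ m ∈ Set.range f) : Nat.nth p = f := by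
  have hinf : (Set.ofPred p).Infinite :=
    (Set.infinite_range_of_injective hf.injective).mono fun m hm => (hp m).2 hm
  have hall : ∀ n, ∀ hfin : (Set.ofPred p).Finite, n < hfin.toFinset.card :=
    fun _ hfin => absurd hfin hinf
  funext n
  refine (Nat.eq_nth_of_strictMonoOn_of_mapsTo_of_surjOn f ?_ ?_ (hf.strictMonoOn _)
    (hall n)).symm
  · intro m hm
    obtain ⟨x, rfl⟩ := (hp m).1 hm
    exact ⟨x, hall x, rfl⟩
  · exact fun x _ => (hp _).2 ⟨x, rfl⟩

lemma C_eq (n : ℕ) : C n = blockStart 3 n + 3 := by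
  rw [C, Nat.nth_eq_of_strictMono (fun _ _ h => by simpa using blockStart_strictMono 3 h)
    t_eq_two_iff]

/-- C(k+1) − C(k) = 7 − t(k)(t(k)+1)/2 for all k ≥ 0. -/
theorem C_diff (k : ℕ) :
    2 * ((C (k + 1) : ℤ) - C k) = 14 - (t k : ℤ) * ((t k : ℤ) + 1) := by
  have hlen := length_sigmaL_iterate_three (t k) (t_le_two k)
  zify at hlen
  rw [C_eq, C_eq, blockStart_succ]
  push_cast
  linarith
end

section
/- For the tribonacci position sequences B and C (positions of 0 and 2 in the infinite tribonacci word), the composition B∘C satisfies B(C(k)) = 2C(k) − k for all k ≥ 0. -/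
/-!
Every 0 of `t = σ(t)` is the first letter of a block `σ(a)`, so the `(n+1)`-st 0 sits at
`|σ(t₀ ⋯ tₙ₋₁)|`. Since `|σ(a)| = 2` for `a ∈ {0, 1}` and `|σ(2)| = 1`, this gives
`B n = 2n - #{i < n | tᵢ = 2}`, and exactly `k` twos precede position `C k`.
-/

lemma sigmaW_ne_nil (a : ℕ) : sigmaW a ≠ [] := by
  rcases a with _ | _ | _ <;> simp [sigmaW]

lemma sigmaW_head (a : ℕ) : (sigmaW a).head (sigmaW_ne_nil a) = 0 := by
  rcases a with _ | _ | _ <;> rfl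

lemma sigmaL_cons (a : ℕ) (u : List ℕ) : sigmaL (a :: u) = sigmaW a ++ sigmaL u := rfl

lemma count_zero_sigmaL (u : List ℕ) : (sigmaL u).count 0 = u.length := by
  induction u with
  | nil => rfl
  | cons a u ih => rcases a with _ | _ | _ <;> simp [sigmaL_cons, sigmaW, ih]

lemma count_one_sigmaL (u : List ℕ) : (sigmaL u).count 1 = u.count 0 := by
  induction u with
  | nil => rfl
  | cons a u ih => rcases a with _ | _ | _ <;> simp [sigmaL_cons, sigmaW, ih]

lemma count_two_sigmaL (u : List ℕ) : (sigmaL u).count 2 = u.count 1 := by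
  induction u with
  | nil => rfl
  | cons a u ih => rcases a with _ | _ | _ <;> simp [sigmaL_cons, sigmaW, ih]

lemma length_sigmaL_add_count_two {u : List ℕ} (hu : ∀ x ∈ u, x < 3) :
    (sigmaL u).length + u.count 2 = 2 * u.length := by
  induction u with
  | nil => rfl
  | cons a u ih =>
    have ha : a < 3 := hu a List.mem_cons_self
    have := ih fun x hx => hu x (List.mem_cons_of_mem a hx)
    interval_cases a <;> simp [sigmaL_cons, sigmaW] <;> omega

lemma lt_three_of_mem_sigmaL {u : List ℕ} {x : ℕ} (hx : x ∈ sigmaL u) : x < 3 := by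
  obtain ⟨a, -, hxa⟩ := List.mem_flatMap.mp hx
  rcases a with _ | _ | _ <;> simp [sigmaW] at hxa <;> omega

def tWord (m : ℕ) : List ℕ := sigmaL^[m] [0]

lemma tWord_succ (m : ℕ) : tWord (m + 1) = sigmaL (tWord m) :=
  Function.iterate_succ_apply' _ _ _

lemma tWord_prefix_tWord_succ (m : ℕ) : tWord m <+: tWord (m + 1) := by
  induction m with
  | zero => exact ⟨[1], rfl⟩
  | succ m ih => rw [tWord_succ, tWord_succ (m + 1)]; exact ih.flatMap sigmaW

lemma tWord_prefix_of_le {m n : ℕ} (h : m ≤ n) : tWord m <+: tWord n := by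
  induction n, h using Nat.le_induction with
  | base => exact List.prefix_refl _
  | succ n _ ih => exact ih.trans (tWord_prefix_tWord_succ n)

lemma lt_three_of_mem_tWord {m x : ℕ} (hx : x ∈ tWord m) : x < 3 := by
  cases m with
  | zero => simp_all [tWord]
  | succ m => rw [tWord_succ] at hx; exact lt_three_of_mem_sigmaL hx

lemma zero_mem_tWord (m : ℕ) : 0 ∈ tWord m :=
  (tWord_prefix_of_le m.zero_le).subset (List.mem_singleton_self 0)

lemma lt_length_tWord (m : ℕ) : m < (tWord m).length := by
  induction m with
  | zero => simp [tWord]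
  | succ m ih =>
    have hlen := length_sigmaL_add_count_two fun _ => lt_three_of_mem_tWord (m := m)
    have hcount : (tWord m).count 2 < (tWord m).length :=
      (List.count_le_length).lt_of_ne fun h => by
        simpa using List.count_eq_length.mp h 0 (zero_mem_tWord m)
    rw [tWord_succ]
    omega

def IsTPrefix (u : List ℕ) : Prop := ∀ i (hi : i < u.length), u[i] = t i

lemma isTPrefix_tWord (m : ℕ) : IsTPrefix (tWord m) := by
  intro i hi
  have hi' : i < (tWord (i + 1)).length := (Nat.lt_succ_self i).trans (lt_length_tWord _)
  show _ = (tWord (i + 1)).getD i 0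
  rw [List.getD_eq_getElem _ _ hi', (tWord_prefix_of_le (le_max_left m (i + 1))).getElem hi,
    (tWord_prefix_of_le (le_max_right m (i + 1))).getElem hi']

lemma IsTPrefix.of_prefix {u v : List ℕ} (hv : IsTPrefix v) (h : u <+: v) : IsTPrefix u :=
  fun i hi => (h.getElem hi).trans (hv i _)

lemma t_lt_three (n : ℕ) : t n < 3 := by
  have hn := lt_length_tWord n
  rw [← isTPrefix_tWord n n hn]
  exact lt_three_of_mem_tWord (List.getElem_mem hn)

lemma IsTPrefix.lt_three {u : List ℕ} (hu : IsTPrefix u) : ∀ x ∈ u, x < 3 := by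
  intro x hx
  obtain ⟨i, hi, rfl⟩ := List.getElem_of_mem hx
  exact hu i hi ▸ t_lt_three i

lemma IsTPrefix.count_eq {u : List ℕ} (hu : IsTPrefix u) (c : ℕ) :
    Nat.count (fun k => t k = c) u.length = u.count c := by
  induction u using List.reverseRecOn with
  | nil => rfl
  | append_singleton u a ih =>
    have ha : t u.length = a := by simpa using (hu u.length (by simp)).symm
    rw [List.length_append, List.length_singleton, Nat.count_succ,
      ih (hu.of_prefix (List.prefix_append u [a])), List.count_append, ha]
    simp [List.count_singleton]

lemma IsTPrefix.prefix_of_length_le {u v : List ℕ} (hu : IsTPrefix u) (hv : IsTPrefix v)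
    (h : u.length ≤ v.length) : u <+: v :=
  List.prefix_iff_eq_take.mpr <| List.ext_getElem (by simpa using h) fun i hi _ => by
    rw [hu i hi, List.getElem_take, hv]

lemma IsTPrefix.sigmaL {u : List ℕ} (hu : IsTPrefix u) : IsTPrefix (sigmaL u) := by
  have hlen : u.length ≤ (tWord u.length).length := (lt_length_tWord _).le
  have hpre := (hu.prefix_of_length_le (isTPrefix_tWord _) hlen).flatMap sigmaW
  exact (isTPrefix_tWord (u.length + 1)).of_prefix (tWord_succ _ ▸ hpre)

lemma B_add_count_two (n : ℕ) : B n + Nat.count (fun k => t k = 2) n = 2 * n := by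
  have hn : n < (tWord n).length := lt_length_tWord n
  set u := (tWord n).take n
  set a := (tWord n)[n]
  have hlen : u.length = n := by simp [u, hn.le]
  have hu : IsTPrefix u := (isTPrefix_tWord n).of_prefix (List.take_prefix n _)
  have hua : IsTPrefix (sigmaL u ++ sigmaW a) := by
    have hsplit : sigmaL u ++ sigmaW a = sigmaL ((tWord n).take (n + 1)) := by
      rw [← List.take_concat_get' _ n hn, sigmaL_append]
      simp [sigmaL, u, a]
    rw [hsplit]
    exact ((isTPrefix_tWord n).of_prefix (List.take_prefix _ _)).sigmaL
  have hzero : t (sigmaL u).length = 0 := by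
    rw [← hua _ (by simpa using List.length_pos_of_ne_nil (sigmaW_ne_nil a))]
    simp [List.getElem_append_right, List.getElem_zero, sigmaW_head]
  have hB : B n = (sigmaL u).length := by
    have hcount : Nat.count (fun k => t k = 0) (sigmaL u).length = n := by
      rw [(hua.of_prefix (List.prefix_append _ _)).count_eq, count_zero_sigmaL, hlen]
    exact hcount ▸ Nat.nth_count hzero
  rw [hB, ← hlen, hu.count_eq, length_sigmaL_add_count_two hu.lt_three]

lemma count_two_tWord_add_three (m : ℕ) : (tWord (m + 3)).count 2 = (tWord m).length := by
  simp only [tWord_succ, count_two_sigmaL, count_one_sigmaL, count_zero_sigmaL]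

lemma infinite_setOf_t_eq_two : {k | t k = 2}.Infinite := by
  intro hfin
  have hbound := Nat.count_le_card hfin (tWord (hfin.toFinset.card + 3)).length
  rw [(isTPrefix_tWord _).count_eq, count_two_tWord_add_three] at hbound
  exact (lt_length_tWord _).not_ge hbound

/-- B(C(k)) = 2C(k) − k for all k ≥ 0. -/
theorem B_comp_C (k : ℕ) : B (C k) = 2 * C k - k := by
  have hcount : Nat.count (fun n => t n = 2) (C k) = k :=
    Nat.count_nth_of_infinite infinite_setOf_t_eq_two k
  have hB := B_add_count_two (C k)
  omega
end
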